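/- Let X ⊂ R^d be finite with span(X) = R^d. Then min over probability distributions λ on X of max_{x∈X} x^T(Σ_{x'∈X} λ_{x'} x'x'^T)^{-1} x equals d (Kiefer–Wolfowitz). -/

import Mathlib

/-!
Kiefer–Wolfowitz. For every design `λ` with invertible `M = ∑ λᵢ xᵢxᵢᵀ`, the `λ`-average of the
variances `xᵢᵀM⁻¹xᵢ` is `tr(M⁻¹M) = d`, so their maximum is at least `d`. Conversely, take a
D-optimal design, a maximiser of `det M` on the simplex; it exists by compactness, and its
determinant is positive because the uniform design already gives a positive definite `M`. Moving
weight `s/(1+s)` onto an arm `x` multiplies `det M` by `(1 + s·xᵀM⁻¹x)/(1+s)^d` (matrix determinant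
lemma), and this factor exceeds `1` for small `s` as soon as `xᵀM⁻¹x > d`. Hence at a D-optimal
design every variance is at most `d`, and the minimum `d` is attained there.
-/

open Matrix

theorem det_add_vecMulVec {n : Type*} [Fintype n] [DecidableEq n] {A : Matrix n n ℝ}
    (hA : IsUnit A.det) (u v : n → ℝ) :
    (A + vecMulVec u v).det = A.det * (1 + v ⬝ᵥ A⁻¹ *ᵥ u) := by
  have : A + vecMulVec u v = A * (1 + vecMulVec (A⁻¹ *ᵥ u) v) := by
    rw [mul_add, mul_one, mul_vecMulVec, mulVec_mulVec, mul_nonsing_inv _ hA, one_mulVec]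
  rw [this, det_mul, vecMulVec_eq Unit, det_one_add_replicateCol_mul_replicateRow]

theorem exists_pow_lt_one_add_mul {d : ℕ} {q : ℝ} (h : (d : ℝ) < q) :
    ∃ s > 0, (1 + s) ^ d < 1 + s * q := by
  have hderiv : HasDerivAt (fun s : ℝ => 1 + s * q - (1 + s) ^ d) (q - d) 0 := by
    simpa using (((hasDerivAt_id (0 : ℝ)).mul_const q).const_add 1).fun_sub
      (((hasDerivAt_id (0 : ℝ)).const_add 1).fun_pow d)
  obtain ⟨s, hslope, hs⟩ := ((hderiv.tendsto_slope_zero_right.eventually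
    (lt_mem_nhds (sub_pos.2 h))).and self_mem_nhdsWithin).exists
  refine ⟨s, hs, ?_⟩
  simp only [zero_add, zero_mul, add_zero, one_pow, sub_self, sub_zero, smul_eq_mul] at hslope
  linarith [pos_of_mul_pos_right hslope (inv_pos.2 hs).le]

theorem sum_mul_le_iSup_of_mem_stdSimplex {ι : Type*} [Fintype ι] {l : ι → ℝ}
    (hl : l ∈ stdSimplex ℝ ι) (f : ι → ℝ) : ∑ i, l i * f i ≤ ⨆ i, f i :=
  calc ∑ i, l i * f i ≤ ∑ i, l i * ⨆ j, f j := Finset.sum_le_sum fun i _ =>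
        mul_le_mul_of_nonneg_left (le_ciSup (Set.finite_range f).bddAbove i) (hl.1 i)
    _ = ⨆ j, f j := by rw [← Finset.sum_mul, hl.2, one_mul]

theorem eq_zero_of_forall_dotProduct_eq_zero {ι n : Type*} [Fintype ι] [Fintype n]
    {x : ι → n → ℝ} (hspan : Submodule.span ℝ (Set.range x) = ⊤) {v : n → ℝ}
    (hv : ∀ i, x i ⬝ᵥ v = 0) : v = 0 := by
  obtain ⟨c, hc⟩ := (Submodule.mem_span_range_iff_exists_fun ℝ).mp
    (hspan ▸ Submodule.mem_top : v ∈ Submodule.span ℝ (Set.range x))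
  rw [← dotProduct_self_eq_zero]
  nth_rewrite 1 [← hc]
  simp [sum_dotProduct, hv]

section DesignMatrix

variable {ι n : Type*} [Fintype ι]

def designMatrix (x : ι → n → ℝ) (l : ι → ℝ) : Matrix n n ℝ :=
  ∑ i, l i • vecMulVec (x i) (x i)

theorem designMatrix_isHermitian (x : ι → n → ℝ) (l : ι → ℝ) :
    (designMatrix x l).IsHermitian := by
  simp [IsHermitian, designMatrix, transpose_sum, transpose_smul, transpose_vecMulVec]

theorem designMatrix_add (x : ι → n → ℝ) (l l' : ι → ℝ) :
    designMatrix x (l + l') = designMatrix x l + designMatrix x l' := by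
  simp [designMatrix, add_smul, Finset.sum_add_distrib]

theorem designMatrix_smul (x : ι → n → ℝ) (c : ℝ) (l : ι → ℝ) :
    designMatrix x (c • l) = c • designMatrix x l := by
  simp [designMatrix, Finset.smul_sum, mul_smul]

theorem designMatrix_single [DecidableEq ι] (x : ι → n → ℝ) (j : ι) :
    designMatrix x (Pi.single j 1) = vecMulVec (x j) (x j) := by
  simp [designMatrix, Pi.single_apply]

variable [Fintype n]

theorem dotProduct_designMatrix_mulVec (x : ι → n → ℝ) (l : ι → ℝ) (v : n → ℝ) :
    v ⬝ᵥ designMatrix x l *ᵥ v = ∑ i, l i * (x i ⬝ᵥ v) ^ 2 := by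
  simp only [designMatrix, sum_mulVec, dotProduct_sum, smul_mulVec, dotProduct_smul,
    vecMulVec_mulVec, op_smul_eq_smul, smul_eq_mul, dotProduct_comm v (x _), sq]

theorem trace_mul_designMatrix (A : Matrix n n ℝ) (x : ι → n → ℝ) (l : ι → ℝ) :
    (A * designMatrix x l).trace = ∑ i, l i * (x i ⬝ᵥ A *ᵥ x i) := by
  simp [designMatrix, Matrix.mul_sum, trace_sum, mul_vecMulVec, dotProduct_comm (x _)]

theorem designMatrix_posDef {x : ι → n → ℝ} (hspan : Submodule.span ℝ (Set.range x) = ⊤)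
    {l : ι → ℝ} (hl : ∀ i, 0 < l i) : (designMatrix x l).PosDef := by
  refine .of_dotProduct_mulVec_pos (designMatrix_isHermitian x l) fun v hv => ?_
  obtain ⟨i, hi⟩ : ∃ i, x i ⬝ᵥ v ≠ 0 := by
    by_contra! h
    exact hv (eq_zero_of_forall_dotProduct_eq_zero hspan h)
  rw [star_trivial, dotProduct_designMatrix_mulVec]
  exact Finset.sum_pos' (fun j _ => by have := hl j; positivity)
    ⟨i, Finset.mem_univ i, by have := hl i; positivity⟩

variable [DecidableEq n] {x : ι → n → ℝ}

theorem sum_mul_dotProduct_inv_designMatrix_mulVec {l : ι → ℝ}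
    (hdet : IsUnit (designMatrix x l).det) :
    ∑ i, l i * (x i ⬝ᵥ (designMatrix x l)⁻¹ *ᵥ x i) = Fintype.card n := by
  rw [← trace_mul_designMatrix, nonsing_inv_mul _ hdet, trace_one]

theorem card_le_iSup_dotProduct_inv_designMatrix_mulVec {l : ι → ℝ} (hl : l ∈ stdSimplex ℝ ι)
    (hdet : IsUnit (designMatrix x l).det) :
    (Fintype.card n : ℝ) ≤ ⨆ j, x j ⬝ᵥ (designMatrix x l)⁻¹ *ᵥ x j :=
  sum_mul_dotProduct_inv_designMatrix_mulVec hdet ▸ sum_mul_le_iSup_of_mem_stdSimplex hl _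

theorem exists_isMaxOn_det_designMatrix [Nonempty ι]
    (hspan : Submodule.span ℝ (Set.range x) = ⊤) :
    ∃ l ∈ stdSimplex ℝ ι, IsMaxOn (fun l => (designMatrix x l).det) (stdSimplex ℝ ι) l ∧
      0 < (designMatrix x l).det := by
  set u : ι → ℝ := fun _ => (Fintype.card ι : ℝ)⁻¹
  have hu : u ∈ stdSimplex ℝ ι := ⟨fun _ => by positivity, by simp [u]⟩
  have hcont : Continuous fun l => (designMatrix x l).det := by
    unfold designMatrix
    fun_prop
  obtain ⟨l, hl, hmax⟩ := (isCompact_stdSimplex ℝ ι).exists_isMaxOn ⟨u, hu⟩ hcont.continuousOn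
  exact ⟨l, hl, hmax,
    (designMatrix_posDef hspan fun _ => by positivity).det_pos.trans_le (hmax hu)⟩

theorem dotProduct_inv_designMatrix_mulVec_le_card_of_isMaxOn {l : ι → ℝ}
    (hl : l ∈ stdSimplex ℝ ι) (hmax : IsMaxOn (fun l => (designMatrix x l).det) (stdSimplex ℝ ι) l)
    (hdet : 0 < (designMatrix x l).det) (j : ι) :
    x j ⬝ᵥ (designMatrix x l)⁻¹ *ᵥ x j ≤ Fintype.card n := by
  classical
  set P := designMatrix x l
  set q := x j ⬝ᵥ P⁻¹ *ᵥ x j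
  by_contra! hq
  obtain ⟨s, hs, hgain⟩ := exists_pow_lt_one_add_mul hq
  set l' := (1 + s)⁻¹ • l + (s / (1 + s)) • Pi.single j 1
  have hl' : l' ∈ stdSimplex ℝ ι :=
    convex_stdSimplex ℝ ι hl (single_mem_stdSimplex ℝ j) (by positivity) (by positivity)
      (by field_simp)
  have hdesign : designMatrix x l' = (1 + s)⁻¹ • (P + vecMulVec (s • x j) (x j)) := by
    rw [designMatrix_add, designMatrix_smul, designMatrix_smul, designMatrix_single, smul_add,
      smul_vecMulVec, smul_smul, div_eq_inv_mul]
  have hdet' : (designMatrix x l').det = P.det * (1 + s * q) / (1 + s) ^ Fintype.card n := by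
    rw [hdesign, det_smul, det_add_vecMulVec hdet.ne'.isUnit, mulVec_smul, dotProduct_smul,
      smul_eq_mul, inv_pow]
    ring
  have hincrease : P.det < (designMatrix x l').det := by
    rw [hdet', lt_div_iff₀ (by positivity)]
    exact mul_lt_mul_of_pos_left hgain hdet
  exact (hmax hl').not_gt hincrease

end DesignMatrix

/-- Kiefer–Wolfowitz: for a finite spanning set of arms, the minimum over designs `λ`
(with invertible design matrix) of the maximum predictive variance
`max_x xᵀ(Σ λ_{x'} x'x'ᵀ)⁻¹x` equals `d`. -/
theorem stmt_13 {K d : ℕ} (x : Fin K → Fin d → ℝ)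
    (hspan : Submodule.span ℝ (Set.range x) = ⊤) :
    (⨅ lam : {l : Fin K → ℝ // (∀ i, 0 ≤ l i) ∧ (∑ i, l i = 1) ∧
        IsUnit (∑ i, l i • Matrix.vecMulVec (x i) (x i)).det},
      ⨆ j : Fin K,
        x j ⬝ᵥ (∑ i, lam.1 i • Matrix.vecMulVec (x i) (x i))⁻¹.mulVec (x j)) = d := by
  rcases isEmpty_or_nonempty (Fin K) with hK | hK
  · have hd : d = 0 := by simpa using finrank_le_of_span_eq_top hspan
    have : IsEmpty {l : Fin K → ℝ // (∀ i, 0 ≤ l i) ∧ (∑ i, l i = 1) ∧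
        IsUnit (∑ i, l i • Matrix.vecMulVec (x i) (x i)).det} :=
      ⟨fun l => by simpa using l.2.2.1⟩
    simp [hd]
  obtain ⟨l, hl, hmax, hdet⟩ := exists_isMaxOn_det_designMatrix hspan
  refine IsLeast.csInf_eq ⟨⟨⟨l, hl.1, hl.2, hdet.ne'.isUnit⟩, ?_⟩, ?_⟩
  · simpa only [designMatrix, Fintype.card_fin] using le_antisymm
      (ciSup_le (dotProduct_inv_designMatrix_mulVec_le_card_of_isMaxOn hl hmax hdet))
      (card_le_iSup_dotProduct_inv_designMatrix_mulVec hl hdet.ne'.isUnit)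
  · rintro _ ⟨lam, rfl⟩
    simpa only [designMatrix, Fintype.card_fin] using
      card_le_iSup_dotProduct_inv_designMatrix_mulVec ⟨lam.2.1, lam.2.2.1⟩ lam.2.2.2
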